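/- arXiv:1511.04314 — 4 statements merged into one kernel-verified Lean document; each statement's English description precedes it below -/
import Mathlib

section
/- For every exchange matrix s there exists an index i ∈ {1,…,d} such that s_{i,j} ≤ 1 for all j ∈ {1,…,d}. In particular, the set {i : ∑_j s_{i,j} < ∞} of indices with finite row sum is nonempty. -/
open MeasureTheory Filter Set Function
open scoped ENNReal

noncomputable section

/-- The product `x * y` of two elements of `[0,∞]` is defined unless `{x, y} = {0, ∞}`. -/
def DefinedProd (x y : ℝ≥0∞) : Prop := ¬(x = 0 ∧ y = ∞) ∧ ¬(x = ∞ ∧ y = 0)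

/-- An exchange matrix: a `d × d` matrix with entries in `[0,∞]` such that `s i i = 1` and
`s i j * s j k = s i k` whenever the product is defined. -/
structure IsExchangeMatrix {d : ℕ} (s : Fin d → Fin d → ℝ≥0∞) : Prop where
  diag : ∀ i, s i i = 1
  consistent : ∀ i j k, DefinedProd (s i j) (s j k) → s i j * s j k = s i k

/-- A value vector for an exchange matrix `s`: `s i j * v j = v i` whenever defined. -/
def IsValueVector {d : ℕ} (s : Fin d → Fin d → ℝ≥0∞) (v : Fin d → ℝ≥0∞) : Prop :=
  ∀ i j, DefinedProd (s i j) (v j) → s i j * v j = v i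

open Classical in
/-- The set of active indices of an exchange matrix: those whose row sum is finite. -/
def activeFinset {d : ℕ} (s : Fin d → Fin d → ℝ≥0∞) : Finset (Fin d) :=
  Finset.univ.filter fun i => ∑ j, s i j < ∞

/-- The market model of the paper: a right-continuous filtration `F` (with `F 0` trivial) on
`[0,T]`, and a right-continuous adapted process `S` of exchange matrices with deterministic
initial value `S0` all of whose rows are finite (no currency has devalued at time `0`). -/
structure MarketModel (d : ℕ) (Ω : Type*) [mΩ : MeasurableSpace Ω] (T : ℝ) where
  F : Filtration ℝ mΩ
  S : ℝ → Ω → Fin d → Fin d → ℝ≥0∞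
  S0 : Fin d → Fin d → ℝ≥0∞
  T_pos : 0 < T
  rc_F : ∀ t ∈ Set.Ico (0 : ℝ) T, (⨅ u ∈ Set.Ioi t, F u) ≤ F t
  trivial_F0 : ∀ A : Set Ω, MeasurableSet[F 0] A → A = ∅ ∨ A = Set.univ
  adapted_S : ∀ t ∈ Set.Icc (0 : ℝ) T, ∀ i j, Measurable[F t] fun ω => S t ω i j
  rc_S : ∀ ω i j, ∀ t ∈ Set.Ico (0 : ℝ) T,
    Tendsto (fun u => S u ω i j) (nhdsWithin t (Set.Ioi t)) (nhds (S t ω i j))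
  exchange_S : ∀ t ∈ Set.Icc (0 : ℝ) T, ∀ ω, IsExchangeMatrix fun i j => S t ω i j
  init_S : ∀ ω, S 0 ω = S0
  active_S0 : ∀ i, ∑ j, S0 i j < ∞

namespace MarketModel

variable {d : ℕ} {Ω : Type*} [mΩ : MeasurableSpace Ω] {T : ℝ}

/-- Basket-quoted price of the `i`-th currency. -/
def Sbar (M : MarketModel d Ω T) (i : Fin d) (t : ℝ) (ω : Ω) : ℝ≥0∞ :=
  (∑ j, M.S t ω i j)⁻¹

/-- The (random) set of active currencies at time `t`. -/
def active (M : MarketModel d Ω T) (t : ℝ) (ω : Ω) : Finset (Fin d) :=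
  activeFinset fun i j => M.S t ω i j

/-- The payoff of a claim `C` in terms of the basket:
`C̄ = (1/|A(T)|) ∑_{j ∈ A(T)} S̄_j(T) C_j`. -/
def Cbar (M : MarketModel d Ω T) (C : Ω → Fin d → ℝ≥0∞) (ω : Ω) : ℝ≥0∞ :=
  ((M.active T ω).card : ℝ≥0∞)⁻¹ * ∑ j ∈ M.active T ω, M.Sbar j T ω * C ω j

/-- A contingent claim: an `F(T)`-measurable value vector for `S(T)`. -/
def IsClaim (M : MarketModel d Ω T) (C : Ω → Fin d → ℝ≥0∞) : Prop :=
  (∀ i, Measurable fun ω => C ω i) ∧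
  ∀ ω, IsValueVector (fun i j => M.S T ω i j) (C ω)

end MarketModel

/-- A real-valued martingale on the time interval `[0, T]`. -/
def MartingaleOn {Ω : Type*} {mΩ : MeasurableSpace Ω} (F : Filtration ℝ mΩ)
    (Q : Measure Ω) (X : ℝ → Ω → ℝ) (T : ℝ) : Prop :=
  (∀ t ∈ Set.Icc (0 : ℝ) T, StronglyMeasurable[F t] (X t) ∧ Integrable (X t) Q) ∧
  ∀ r ∈ Set.Icc (0 : ℝ) T, ∀ t ∈ Set.Icc (0 : ℝ) T, r ≤ t → Q[X t|F r] =ᵐ[Q] X r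

/-- A real-valued supermartingale on the time interval `[0, T]`. -/
def SupermartingaleOn {Ω : Type*} {mΩ : MeasurableSpace Ω} (F : Filtration ℝ mΩ)
    (Q : Measure Ω) (X : ℝ → Ω → ℝ) (T : ℝ) : Prop :=
  (∀ t ∈ Set.Icc (0 : ℝ) T, StronglyMeasurable[F t] (X t) ∧ Integrable (X t) Q) ∧
  ∀ r ∈ Set.Icc (0 : ℝ) T, ∀ t ∈ Set.Icc (0 : ℝ) T, r ≤ t → Q[X t|F r] ≤ᵐ[Q] X r

/-- A local martingale on `[0, T]`: there is a nondecreasing sequence of stopping times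
with `Q(lim_n τ_n > T) = 1` such that each stopped process is a martingale on `[0, T]`. -/
def LocalMartingaleOn {Ω : Type*} {mΩ : MeasurableSpace Ω} (F : Filtration ℝ mΩ)
    (Q : Measure Ω) (X : ℝ → Ω → ℝ) (T : ℝ) : Prop :=
  ∃ τ : ℕ → Ω → ℝ,
    (∀ n, IsStoppingTime F (fun ω => ((τ n ω : ℝ) : WithTop ℝ))) ∧
    (∀ n ω, τ n ω ≤ τ (n + 1) ω) ∧
    (∀ᵐ ω ∂Q, ∃ n, T < τ n ω) ∧
    ∀ n, MartingaleOn F Q (fun t ω => X (min t (τ n ω)) ω) T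

/-- A numéraire-consistent family of probability measures:
`E^{Q_i}[S_{i,j}(t) 1_A] = S_{i,j}(0) Q_j(A ∩ {S_{j,i}(t) > 0})`. -/
def NumeraireConsistent {d : ℕ} {Ω : Type*} [mΩ : MeasurableSpace Ω] {T : ℝ}
    (M : MarketModel d Ω T) (Q : Fin d → Measure Ω) : Prop :=
  (∀ i, IsProbabilityMeasure (Q i)) ∧
  ∀ i j : Fin d, ∀ t ∈ Set.Icc (0 : ℝ) T, ∀ A : Set Ω, MeasurableSet[M.F t] A →
    ∫⁻ ω in A, M.S t ω i j ∂(Q i) = M.S0 i j * Q j (A ∩ {ω | 0 < M.S t ω j i})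

/-- A valuation measure with respect to the basket: the basket-quoted prices form a
`Q̄`-martingale on `[0, T]`. -/
def IsValuationMeasure {d : ℕ} {Ω : Type*} [mΩ : MeasurableSpace Ω] {T : ℝ}
    (M : MarketModel d Ω T) (Qb : Measure Ω) : Prop :=
  IsProbabilityMeasure Qb ∧
  ∀ i, MartingaleOn M.F Qb (fun t ω => (M.Sbar i t ω).toReal) T

/-- The aggregation valuation formula
`E^{Q̄}[C̄ | F(r)] = ∑_{j ∈ A(r)} S̄_j(r) E^{Q_j}[C_j / |A(T)| | F(r)]`. -/
def AggregationFormula {d : ℕ} {Ω : Type*} [mΩ : MeasurableSpace Ω] {T : ℝ}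
    (M : MarketModel d Ω T) (Qb : Measure Ω) (Q : Fin d → Measure Ω)
    (C : Ω → Fin d → ℝ≥0∞) (r : ℝ) : Prop :=
  Qb[fun ω => (M.Cbar C ω).toReal|M.F r] =ᵐ[Qb] fun ω =>
    ∑ j, Set.indicator {ω' | ∑ k, M.S r ω' j k < ∞}
      (fun ω' => (M.Sbar j r ω').toReal *
        ((Q j)[fun ω'' => (C ω'' j / ((M.active T ω'').card : ℝ≥0∞)).toReal|M.F r]) ω') ω

/-- An `[0,∞]`-valued process jumps to zero on `[0, T]`: it is zero at some time `t ∈ [0, T]`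
while its left limit at `t` is strictly positive. -/
def JumpsToZeroOn (X : ℝ → ℝ≥0∞) (T : ℝ) : Prop :=
  ∃ t ∈ Set.Icc (0 : ℝ) T, X t = 0 ∧ 0 < Function.leftLim X t

/-- A `[0,∞]`-valued stopping time. -/
def IsStoppingTimeE {Ω : Type*} {mΩ : MeasurableSpace Ω} (F : Filtration ℝ mΩ)
    (τ : Ω → ℝ≥0∞) : Prop :=
  ∀ t : ℝ, 0 ≤ t → MeasurableSet[F t] {ω | τ ω ≤ ENNReal.ofReal t}

/-- Membership in the σ-algebra `F(τ)` for a `[0,∞]`-valued stopping time `τ`. -/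
def MeasurableSetAtE {Ω : Type*} {mΩ : MeasurableSpace Ω} (F : Filtration ℝ mΩ)
    (τ : Ω → ℝ≥0∞) (A : Set Ω) : Prop :=
  MeasurableSet A ∧ ∀ t : ℝ, 0 ≤ t → MeasurableSet[F t] (A ∩ {ω | τ ω ≤ ENNReal.ofReal t})

/-- A predictable time: a stopping time announced by a nondecreasing sequence of stopping
times converging to it and strictly smaller than it on its finiteness set. -/
def IsPredictableTimeE {Ω : Type*} {mΩ : MeasurableSpace Ω} (F : Filtration ℝ mΩ)
    (σ : Ω → ℝ≥0∞) : Prop :=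
  IsStoppingTimeE F σ ∧
  ∃ a : ℕ → Ω → ℝ≥0∞,
    (∀ n, IsStoppingTimeE F (a n)) ∧
    (∀ n ω, a n ω ≤ a (n + 1) ω) ∧
    (∀ ω, (⨆ n, a n ω) = σ ω) ∧
    ∀ n ω, 0 < σ ω → σ ω < ∞ → a n ω < σ ω

/-- No Obvious Devaluations: for every currency `i` and stopping time `τ`,
`P(i ∈ A(T) | F(τ)) > 0` almost surely on `{τ < ∞} ∩ {i ∈ A(τ)}`, formulated via
`F(τ)`-measurable subsets of that event. -/
def NOD {d : ℕ} {Ω : Type*} [mΩ : MeasurableSpace Ω] {T : ℝ}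
    (M : MarketModel d Ω T) (P : Measure Ω) : Prop :=
  ∀ i : Fin d, ∀ τ : Ω → ℝ≥0∞, IsStoppingTimeE M.F τ →
    ∀ A : Set Ω, MeasurableSetAtE M.F τ A →
      (∀ ω ∈ A, τ ω < ∞ ∧ ∑ j, M.S (τ ω).toReal ω i j < ∞) →
      0 < P A → 0 < P (A ∩ {ω | ∑ j, M.S T ω i j < ∞})

/-! Entries `s i j > 1` chain: their products are always defined, so consistency makes
`1 < s i j` a strict order on the indices. A minimal index `i` for it, which exists since the
index set is finite, is a row with every entry at most `1`. -/

theorem DefinedProd.of_ne_zero {x y : ℝ≥0∞} (hx : x ≠ 0) (hy : y ≠ 0) : DefinedProd x y :=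
  ⟨fun h => hx h.1, fun h => hy h.2⟩

namespace IsExchangeMatrix

variable {d : ℕ} {s : Fin d → Fin d → ℝ≥0∞}

theorem one_lt_trans (hs : IsExchangeMatrix s) {i j k : Fin d} (hij : 1 < s i j)
    (hjk : 1 < s j k) : 1 < s i k := by
  have hdef : DefinedProd (s i j) (s j k) :=
    .of_ne_zero (zero_lt_one.trans hij).ne' (zero_lt_one.trans hjk).ne'
  rw [← hs.consistent i j k hdef]
  exact one_lt_mul hij.le hjk

theorem exists_forall_le_one [Nonempty (Fin d)] (hs : IsExchangeMatrix s) :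
    ∃ i, ∀ j, s i j ≤ 1 := by
  let beats : Fin d → Fin d → Prop := fun j i => 1 < s i j
  have : IsTrans (Fin d) beats := ⟨fun _ _ _ hkj hji => hs.one_lt_trans hji hkj⟩
  have : Std.Irrefl beats := ⟨fun i => by simp [beats, hs.diag i]⟩
  obtain ⟨i, -, hmin⟩ :=
    (Finite.wellFounded_of_trans_of_irrefl beats).has_min Set.univ Set.univ_nonempty
  exact ⟨i, fun j => not_lt.1 (hmin j trivial)⟩

end IsExchangeMatrix

/-- For every exchange matrix `s` there exists an index `i` with `s i j ≤ 1`
for all `j`; in particular the set of indices with finite row sum is nonempty. -/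
theorem exchangeMatrix_exists_strong_currency {d : ℕ} (hd : 0 < d)
    (s : Fin d → Fin d → ℝ≥0∞) (hs : IsExchangeMatrix s) :
    (∃ i, ∀ j, s i j ≤ 1) ∧ {i : Fin d | ∑ j, s i j < ∞}.Nonempty := by
  have : Nonempty (Fin d) := ⟨⟨0, hd⟩⟩
  obtain ⟨i, hi⟩ := hs.exists_forall_le_one
  exact ⟨⟨i, hi⟩, i, ENNReal.sum_lt_top.2 fun j _ => (hi j).trans_lt ENNReal.one_lt_top⟩
end
end

section
/- Let s be an exchange matrix and define the basket-quoted prices s̄_i = 1/∑_j s_{i,j} ∈ [0,1] for each i. Then ∑_j s̄_j = 1. -/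
open MeasureTheory Filter Set Function
open scoped ENNReal

noncomputable section

/-!
The relation `s i j = ∞` is a strict order on the indices: it is irreflexive as `s i i = 1`, and
transitive because `s j k = ∞` forces `s k j = 0`, so a finite `s i k` would give
`s i j = s i k * s k j = 0`. By finiteness some row `i` therefore has only finite entries.
Relative to such a row, every row `j` is either the positive finite multiple `s j i • s i` (when
`s i j > 0`) or has the infinite entry `s j i = ∞` (when `s i j = 0`). Hence
`s̄ j = s i j / ∑ₖ s i k` for every `j`, and these sum to `1`.
-/

namespace DefinedProd

variable {x y : ℝ≥0∞}

lemma of_ne_zero_s1 (hx : x ≠ 0) (hy : y ≠ 0) : DefinedProd x y :=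
  ⟨fun h => hx h.1, fun h => hy h.2⟩

lemma of_ne_top (hx : x ≠ ∞) (hy : y ≠ ∞) : DefinedProd x y :=
  ⟨fun h => hy h.2, fun h => hx h.1⟩

lemma of_left_ne_zero_ne_top (h0 : x ≠ 0) (htop : x ≠ ∞) : DefinedProd x y :=
  ⟨fun h => h0 h.1, fun h => htop h.1⟩

end DefinedProd

namespace IsExchangeMatrix

variable {d : ℕ} {s : Fin d → Fin d → ℝ≥0∞}

lemma mul_swap_eq_one (hs : IsExchangeMatrix s) {i j : Fin d}
    (h : DefinedProd (s i j) (s j i)) : s i j * s j i = 1 := by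
  rw [hs.consistent i j i h, hs.diag]

lemma eq_zero_of_eq_top (hs : IsExchangeMatrix s) {i j : Fin d} (h : s i j = ∞) :
    s j i = 0 := by
  by_contra h0
  have := hs.mul_swap_eq_one (.of_ne_zero h0 (h ▸ ENNReal.top_ne_zero))
  rw [h, ENNReal.mul_top h0] at this
  exact ENNReal.top_ne_one this

lemma eq_top_of_eq_zero (hs : IsExchangeMatrix s) {i j : Fin d} (h : s j i = 0) :
    s i j = ∞ := by
  by_contra htop
  have := hs.mul_swap_eq_one (.of_ne_top htop (h ▸ ENNReal.zero_ne_top))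
  rw [h, mul_zero] at this
  exact zero_ne_one this

lemma eq_top_trans (hs : IsExchangeMatrix s) {i j k : Fin d} (hij : s i j = ∞)
    (hjk : s j k = ∞) : s i k = ∞ := by
  by_contra hik
  have hkj := hs.eq_zero_of_eq_top hjk
  have := hs.consistent i k j (.of_ne_top hik (hkj ▸ ENNReal.zero_ne_top))
  rw [hkj, mul_zero, hij] at this
  exact ENNReal.zero_ne_top this

lemma exists_row_ne_top (hs : IsExchangeMatrix s) (hd : 0 < d) :
    ∃ i, ∀ j, s i j ≠ ∞ := by
  let r : Fin d → Fin d → Prop := fun j i => s i j = ∞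
  have : IsTrans (Fin d) r := ⟨fun _ _ _ hab hbc => hs.eq_top_trans hbc hab⟩
  have : Std.Irrefl r := ⟨fun i h => by simp [r, hs.diag i] at h⟩
  obtain ⟨i, -, hi⟩ := (Finite.wellFounded_of_trans_of_irrefl r).has_min Set.univ
    ⟨⟨0, hd⟩, trivial⟩
  exact ⟨i, fun j => hi j trivial⟩

lemma row_sum_ne_zero (hs : IsExchangeMatrix s) (i : Fin d) : ∑ k, s i k ≠ 0 := fun h =>
  one_ne_zero <| hs.diag i ▸ Finset.sum_eq_zero_iff.mp h i (Finset.mem_univ i)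

lemma row_sum_eq_mul (hs : IsExchangeMatrix s) {i j : Fin d} (h0 : s j i ≠ 0)
    (htop : s j i ≠ ∞) : ∑ k, s j k = s j i * ∑ k, s i k := by
  rw [Finset.mul_sum]
  exact Finset.sum_congr rfl fun k _ =>
    (hs.consistent j i k (.of_left_ne_zero_ne_top h0 htop)).symm

lemma inv_row_sum_eq (hs : IsExchangeMatrix s) {i : Fin d} (hi : ∀ k, s i k ≠ ∞) (j : Fin d) :
    (∑ k, s j k)⁻¹ = s i j * (∑ k, s i k)⁻¹ := by
  by_cases h0 : s i j = 0
  · have hsj : ∑ k, s j k = ∞ :=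
      ENNReal.sum_eq_top.mpr ⟨i, Finset.mem_univ _, hs.eq_top_of_eq_zero h0⟩
    rw [hsj, h0, ENNReal.inv_top, zero_mul]
  · have h1 := hs.mul_swap_eq_one (.of_left_ne_zero_ne_top h0 (hi j))
    have hji0 : s j i ≠ 0 := right_ne_zero_of_mul_eq_one h1
    have hjitop : s j i ≠ ∞ := fun h => by
      rw [h, ENNReal.mul_top h0] at h1
      exact ENNReal.top_ne_one h1
    rw [hs.row_sum_eq_mul hji0 hjitop, ENNReal.mul_inv (.inl hji0) (.inl hjitop),
      ← ENNReal.eq_inv_of_mul_eq_one_left h1]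

end IsExchangeMatrix

/-- For an exchange matrix `s` with basket-quoted prices
`s̄ i = (∑ j, s i j)⁻¹`, one has `∑ j, s̄ j = 1`. -/
theorem exchangeMatrix_sum_basket_prices_eq_one {d : ℕ} (hd : 0 < d)
    (s : Fin d → Fin d → ℝ≥0∞) (hs : IsExchangeMatrix s)
    (sbar : Fin d → ℝ≥0∞) (hsbar : ∀ i, sbar i = (∑ j, s i j)⁻¹) :
    ∑ j, sbar j = 1 := by
  obtain ⟨i, hi⟩ := hs.exists_row_ne_top hd
  calc ∑ j, sbar j = ∑ j, s i j * (∑ k, s i k)⁻¹ :=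
        Finset.sum_congr rfl fun j _ => by rw [hsbar, hs.inv_row_sum_eq hi]
    _ = (∑ j, s i j) * (∑ k, s i k)⁻¹ := (Finset.sum_mul _ _ _).symm
    _ = 1 := ENNReal.mul_inv_cancel (hs.row_sum_ne_zero i)
        (ENNReal.sum_ne_top.mpr fun k _ => hi k)
end
end

section
/- Let s be an exchange matrix, let A = {i : ∑_j s_{i,j} < ∞} be its set of active indices, and let s̄_i = 1/∑_j s_{i,j}. Fix i and let v = (s_{j,i})_j be the value vector corresponding to one unit of the i-th currency. Then v is a value vector for s, and its basket payoff (1/|A|)·∑_{j∈A} s̄_j·v_j equals s̄_i. -/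
open MeasureTheory Filter Set Function
open scoped ENNReal

noncomputable section

/-! If `j` is active and `s j i ≠ 0`, consistency through `j` shows that row `i` is row `j`
scaled by `(s j i)⁻¹`, so `s̄ j * s j i = s̄ i`; and if `s j i = 0` then `i` cannot be active,
since otherwise `s j i * s i j = s j j = 1`. Hence every term of the basket payoff of one unit
of currency `i` equals `s̄ i`, and the average over the active indices is `s̄ i` as well (both
sides vanish when `i` is inactive). -/

lemma mem_activeFinset {d : ℕ} {s : Fin d → Fin d → ℝ≥0∞} {j : Fin d} :
    j ∈ activeFinset s ↔ ∑ k, s j k < ∞ := by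
  simp [activeFinset]

lemma ne_top_of_mem_activeFinset {d : ℕ} {s : Fin d → Fin d → ℝ≥0∞} {j : Fin d}
    (hj : j ∈ activeFinset s) (k : Fin d) : s j k ≠ ∞ :=
  (ENNReal.sum_lt_top.1 (mem_activeFinset.1 hj) k (Finset.mem_univ k)).ne

namespace IsExchangeMatrix

variable {d : ℕ} {s : Fin d → Fin d → ℝ≥0∞}

lemma isValueVector_col (hs : IsExchangeMatrix s) (i : Fin d) :
    IsValueVector s fun j => s j i :=
  fun j k h => hs.consistent j k i h

lemma rowSum_ne_zero (hs : IsExchangeMatrix s) (j : Fin d) : ∑ k, s j k ≠ 0 := fun h => by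
  simpa [hs.diag j] using Finset.sum_eq_zero_iff.1 h j (Finset.mem_univ j)

lemma ne_zero_of_mem_activeFinset (hs : IsExchangeMatrix s) {i j : Fin d}
    (hi : i ∈ activeFinset s) (hj : j ∈ activeFinset s) : s j i ≠ 0 := by
  intro hji
  have h := hs.consistent j i j
    ⟨fun h => ne_top_of_mem_activeFinset hi j h.2, fun h => ne_top_of_mem_activeFinset hj i h.1⟩
  simp [hji, hs.diag j] at h

lemma rowSum_eq_inv_mul_rowSum (hs : IsExchangeMatrix s) {i j : Fin d}
    (hj : j ∈ activeFinset s) (hji : s j i ≠ 0) :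
    ∑ k, s i k = (s j i)⁻¹ * ∑ k, s j k := by
  have hji_top := ne_top_of_mem_activeFinset hj i
  rw [Finset.mul_sum]
  refine Finset.sum_congr rfl fun k _ => ?_
  rw [← hs.consistent j i k ⟨fun h => hji h.1, fun h => hji_top h.1⟩, ← mul_assoc,
    ENNReal.inv_mul_cancel hji hji_top, one_mul]

lemma rowSum_inv_mul_eq_rowSum_inv (hs : IsExchangeMatrix s) {j : Fin d}
    (hj : j ∈ activeFinset s) (i : Fin d) :
    (∑ k, s j k)⁻¹ * s j i = (∑ k, s i k)⁻¹ := by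
  by_cases hji : s j i = 0
  · have hi : ∑ k, s i k = ∞ :=
      not_lt_top_iff.1 fun hi => hs.ne_zero_of_mem_activeFinset (mem_activeFinset.2 hi) hj hji
    rw [hji, hi, mul_zero, ENNReal.inv_top]
  · rw [hs.rowSum_eq_inv_mul_rowSum hj hji,
      ENNReal.mul_inv (Or.inr (mem_activeFinset.1 hj).ne) (Or.inr (hs.rowSum_ne_zero j)),
      inv_inv, mul_comm]

end IsExchangeMatrix

theorem valueVector_unit_currency_basket_payoff_general {d : ℕ}
    (s : Fin d → Fin d → ℝ≥0∞) (hs : IsExchangeMatrix s) (i : Fin d) :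
    IsValueVector s (fun j => s j i) ∧
    ((activeFinset s).card : ℝ≥0∞)⁻¹ * ∑ j ∈ activeFinset s, (∑ k, s j k)⁻¹ * s j i
      = (∑ k, s i k)⁻¹ := by
  refine ⟨hs.isValueVector_col i, ?_⟩
  rw [Finset.sum_congr rfl fun j hj => hs.rowSum_inv_mul_eq_rowSum_inv hj i, Finset.sum_const,
    nsmul_eq_mul, ← mul_assoc]
  by_cases hi : i ∈ activeFinset s
  · rw [ENNReal.inv_mul_cancel (Nat.cast_ne_zero.2 (Finset.card_ne_zero_of_mem hi))
      (ENNReal.natCast_ne_top _), one_mul]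
  · rw [ENNReal.inv_eq_zero.2 (not_lt_top_iff.1 (mt mem_activeFinset.2 hi)), mul_zero]

/-- The vector `v = (s j i)_j` of values of one unit of the `i`-th currency is a
value vector for `s`, and its basket payoff `(1/|A|) ∑_{j ∈ A} s̄ j * v j` equals `s̄ i`,
where `A` is the set of active indices and `s̄ j = (∑ k, s j k)⁻¹`. -/
theorem valueVector_unit_currency_basket_payoff {d : ℕ} (hd : 0 < d)
    (s : Fin d → Fin d → ℝ≥0∞) (hs : IsExchangeMatrix s) (i : Fin d) :
    IsValueVector s (fun j => s j i) ∧
    ((activeFinset s).card : ℝ≥0∞)⁻¹ * ∑ j ∈ activeFinset s, (∑ k, s j k)⁻¹ * s j i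
      = (∑ k, s i k)⁻¹ :=
  valueVector_unit_currency_basket_payoff_general s hs i
end
end

section
/- Suppose (Q_i)_{i=1}^d is a numéraire-consistent family of probability measures. Then for each i: the process S_i = (S_{i,j})_j (the i-th row of S) is a Q_i-supermartingale (in particular each S_{i,j} is real-valued and integrable under Q_i), and Q_i(i ∈ A(t) for all t ∈ [0,T]) = 1, i.e. under Q_i the i-th currency almost surely never devalues against any other currency. -/
open MeasureTheory Filter Set Function
open scoped ENNReal

noncomputable section

open Topology

/-!
Numéraire consistency with `A = Ω` bounds `E^{Q_i}[S_{i,j}(t)]` by `S_{i,j}(0) < ∞`. With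
`A ∈ F(r)` it shows that `Q_j(A ∩ {S_{j,i}(t) > 0})` can only decrease in `t`: the part of `A`
where `S_{j,i}(r) = 0` has `S_{i,j}(r) = ∞`, so it is `Q_i`-null, and then its `Q_j`-mass
carried by `{S_{j,i}(t) > 0}` vanishes as well. Hence the set integrals of `S_{i,j}` over
`F(r)`-sets decrease, which is the supermartingale property.

For the absence of explosions, decompose `{max_{s ∈ G} S_{i,j}(s) ≥ c}` over a finite time set
`G` according to the first time `c` is reached; consistency gives the maximal inequality
`c · Q_i(max_{s ∈ G} S_{i,j}(s) ≥ c) ≤ S_{i,j}(0)`. It passes to the rational times, and right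
continuity turns an explosion before `T` into unbounded values at rational times.
-/

namespace IsExchangeMatrix

variable {d : ℕ} {s : Fin d → Fin d → ℝ≥0∞}

theorem apply_swap (hs : IsExchangeMatrix s) (a b : Fin d) : s b a = (s a b)⁻¹ := by
  by_cases h : DefinedProd (s b a) (s a b)
  · exact ENNReal.eq_inv_of_mul_eq_one_left ((hs.consistent b a b h).trans (hs.diag b))
  · rw [DefinedProd, ← not_or, not_not] at h
    rcases h with ⟨h₁, h₂⟩ | ⟨h₁, h₂⟩ <;> simp [h₁, h₂]

theorem apply_eq_top_iff (hs : IsExchangeMatrix s) (a b : Fin d) : s a b = ∞ ↔ s b a = 0 := by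
  rw [hs.apply_swap b a, ENNReal.inv_eq_top]

end IsExchangeMatrix

theorem ENNReal.eq_zero_of_forall_natCast_mul_le {m K : ℝ≥0∞} (hK : K ≠ ∞)
    (h : ∀ n : ℕ, n * m ≤ K) : m = 0 := by
  have htop : ∞ * m ≤ K := by
    rw [← ENNReal.iSup_natCast, ENNReal.iSup_mul]
    exact iSup_le h
  by_contra hm
  rw [ENNReal.top_mul hm, top_le_iff] at htop
  exact hK htop

theorem exists_ratCast_mem_Ioo_lt_of_tendsto_top {f : ℝ → ℝ≥0∞} {t T : ℝ} (htT : t < T)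
    (hf : Tendsto f (𝓝[>] t) (𝓝 ∞)) {c : ℝ≥0∞} (hc : c < ∞) :
    ∃ q : ℚ, (q : ℝ) ∈ Ioo t T ∧ c < f q := by
  have hev : ∀ᶠ u in 𝓝[>] t, u ∈ Ioo t T ∧ c < f u :=
    Eventually.and (Ioo_mem_nhdsGT htT) (hf (Ioi_mem_nhds hc))
  obtain ⟨u, htu, hsub⟩ := mem_nhdsGT_iff_exists_Ioo_subset.1 hev
  obtain ⟨q, hq⟩ := exists_rat_btwn (mem_Ioi.1 htu)
  exact ⟨q, hsub hq⟩

section FirstHit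

variable {ι Ω α : Type*} [LinearOrder ι] [LinearOrder α]

def firstHitSet (G : Finset ι) (X : ι → Ω → α) (c : α) (s : ι) : Set Ω :=
  {ω | c ≤ X s ω ∧ ∀ u ∈ G, u < s → X u ω < c}

variable {G : Finset ι} {X : ι → Ω → α} {c : α}

theorem biUnion_firstHitSet :
    ⋃ s ∈ G, firstHitSet G X c s = {ω | ∃ s ∈ G, c ≤ X s ω} := by
  ext ω
  simp only [mem_iUnion, mem_ofPred_eq, firstHitSet, exists_prop]
  refine ⟨fun ⟨s, hs, hc, _⟩ => ⟨s, hs, hc⟩, fun ⟨s, hs, hc⟩ => ?_⟩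
  obtain ⟨u, hu, hmin⟩ := (G.filter fun v => c ≤ X v ω).exists_min_image id
    ⟨s, Finset.mem_filter.2 ⟨hs, hc⟩⟩
  rw [Finset.mem_filter] at hu
  refine ⟨u, hu.1, hu.2, fun v hv hvu => not_le.1 fun hcv => ?_⟩
  exact (hmin v (Finset.mem_filter.2 ⟨hv, hcv⟩)).not_gt hvu

theorem pairwiseDisjoint_firstHitSet : (G : Set ι).PairwiseDisjoint (firstHitSet G X c) := by
  intro s hs u hu hsu
  rcases hsu.lt_or_gt with h | h
  · exact disjoint_left.2 fun ω hωs hωu => (hωu.2 s hs h).not_ge hωs.1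
  · exact disjoint_left.2 fun ω hωs hωu => (hωs.2 u hu h).not_ge hωu.1

end FirstHit

section Maximal

variable {ι Ω : Type*} [LinearOrder ι] {m : MeasurableSpace Ω} {F : Filtration ι m}
  {μ ν : Measure Ω} {X : ι → Ω → ℝ≥0∞} {K : ℝ≥0∞}

theorem measurableSet_firstHitSet {G : Finset ι} {c : ℝ≥0∞}
    (hX : ∀ u ∈ G, Measurable[F u] (X u)) {s : ι} (hs : s ∈ G) :
    MeasurableSet[F s] (firstHitSet G X c s) := by
  have hset : firstHitSet G X c s =
      {ω | c ≤ X s ω} ∩ ⋂ u ∈ G, ⋂ _ : u < s, {ω | X u ω < c} := by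
    ext ω
    simp [firstHitSet]
  rw [hset]
  exact (hX s hs measurableSet_Ici).inter <| .biInter G.countable_toSet fun u hu =>
    .iInter fun hus => F.mono hus.le _ (hX u hu measurableSet_Iio)

theorem mul_measure_exists_le_le_of_setLIntegral_le {G : Finset ι}
    (hX : ∀ s ∈ G, Measurable[F s] (X s))
    (hdom : ∀ s ∈ G, ∀ A, MeasurableSet[F s] A → ∫⁻ ω in A, X s ω ∂μ ≤ K * ν A)
    (c : ℝ≥0∞) : c * μ {ω | ∃ s ∈ G, c ≤ X s ω} ≤ K * ν univ := by
  have hmeas : ∀ s ∈ G, MeasurableSet (firstHitSet G X c s) := fun s hs =>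
    F.le s _ (measurableSet_firstHitSet hX hs)
  rw [← biUnion_firstHitSet]
  calc c * μ (⋃ s ∈ G, firstHitSet G X c s)
      ≤ ∑ s ∈ G, c * μ (firstHitSet G X c s) := by
        rw [← Finset.mul_sum]
        exact mul_le_mul_right (measure_biUnion_finset_le G _) c
    _ ≤ ∑ s ∈ G, ∫⁻ ω in firstHitSet G X c s, X s ω ∂μ := by
        refine Finset.sum_le_sum fun s hs => ?_
        rw [← setLIntegral_const]
        exact setLIntegral_mono ((hX s hs).mono (F.le s) le_rfl) fun ω hω => hω.1
    _ ≤ ∑ s ∈ G, K * ν (firstHitSet G X c s) :=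
        Finset.sum_le_sum fun s hs => hdom s hs _ (measurableSet_firstHitSet hX hs)
    _ = K * ν (⋃ s ∈ G, firstHitSet G X c s) := by
        rw [← Finset.mul_sum, measure_biUnion_finset pairwiseDisjoint_firstHitSet hmeas]
    _ ≤ K * ν univ := mul_le_mul_right (measure_mono (subset_univ _)) K

theorem mul_measure_exists_mem_le_le_of_setLIntegral_le {D : Set ι} (hD : D.Countable)
    (hX : ∀ s ∈ D, Measurable[F s] (X s))
    (hdom : ∀ s ∈ D, ∀ A, MeasurableSet[F s] A → ∫⁻ ω in A, X s ω ∂μ ≤ K * ν A)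
    (c : ℝ≥0∞) : c * μ {ω | ∃ s ∈ D, c ≤ X s ω} ≤ K * ν univ := by
  have := hD.to_subtype
  let E : Finset D → Set Ω := fun G => {ω | ∃ s ∈ G.map (Embedding.subtype _), c ≤ X s ω}
  have hunion : {ω | ∃ s ∈ D, c ≤ X s ω} = ⋃ G, E G := by
    ext ω
    simp only [E, mem_ofPred_eq, mem_iUnion, Finset.mem_map, Embedding.coe_subtype]
    constructor
    · rintro ⟨s, hs, hc⟩
      exact ⟨{⟨s, hs⟩}, s, ⟨⟨s, hs⟩, Finset.mem_singleton_self _, rfl⟩, hc⟩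
    · rintro ⟨G, s, ⟨x, -, rfl⟩, hc⟩
      exact ⟨x, x.2, hc⟩
  have hE : Monotone E := fun G G' h ω ⟨s, hs, hc⟩ => ⟨s, Finset.map_subset_map.2 h hs, hc⟩
  rw [hunion, hE.directed_le.measure_iUnion, ENNReal.mul_iSup]
  have hmem : ∀ G : Finset D, ∀ s ∈ G.map (Embedding.subtype _), s ∈ D := fun G _ hs =>
    Finset.property_of_mem_map_subtype G hs
  exact iSup_le fun G => mul_measure_exists_le_le_of_setLIntegral_le
    (fun s hs => hX s (hmem G s hs)) (fun s hs => hdom s (hmem G s hs)) c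

end Maximal

theorem condExp_ae_le_of_forall_setIntegral_le {Ω : Type*} {m m₀ : MeasurableSpace Ω}
    {μ : Measure Ω} (hm : m ≤ m₀) [SigmaFinite (μ.trim hm)] {f g : Ω → ℝ}
    (hf : Integrable f μ) (hg : Integrable g μ) (hgm : StronglyMeasurable[m] g)
    (hfg : ∀ s, MeasurableSet[m] s → ∫ ω in s, f ω ∂μ ≤ ∫ ω in s, g ω ∂μ) :
    μ[f|m] ≤ᵐ[μ] g := by
  refine ae_le_of_ae_le_trim (hm := hm) <| ae_le_of_forall_setIntegral_le
    (integrable_condExp.trim hm stronglyMeasurable_condExp) (hg.trim hm hgm) fun s hs _ => ?_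
  rw [← setIntegral_trim hm stronglyMeasurable_condExp hs, ← setIntegral_trim hm hgm hs,
    setIntegral_condExp hm hf hs]
  exact hfg s hs

theorem supermartingaleOn_toReal_of_setLIntegral_antitone {Ω : Type*} {m : MeasurableSpace Ω}
    {F : Filtration ℝ m} {Q : Measure Ω} [IsFiniteMeasure Q] {X : ℝ → Ω → ℝ≥0∞} {T : ℝ}
    (hX : ∀ t ∈ Icc 0 T, Measurable[F t] (X t))
    (hfin : ∀ t ∈ Icc 0 T, ∫⁻ ω, X t ω ∂Q ≠ ∞)
    (hanti : ∀ r ∈ Icc 0 T, ∀ t ∈ Icc 0 T, r ≤ t → ∀ A, MeasurableSet[F r] A →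
      ∫⁻ ω in A, X t ω ∂Q ≤ ∫⁻ ω in A, X r ω ∂Q) :
    SupermartingaleOn F Q (fun t ω => (X t ω).toReal) T := by
  have hXm : ∀ t ∈ Icc 0 T, Measurable (X t) := fun t ht => (hX t ht).mono (F.le t) le_rfl
  have hint : ∀ t ∈ Icc 0 T, Integrable (fun ω => (X t ω).toReal) Q := fun t ht =>
    integrable_toReal_of_lintegral_ne_top (hXm t ht).aemeasurable (hfin t ht)
  have hsetIntegral : ∀ t ∈ Icc 0 T, ∀ A,
      ∫ ω in A, (X t ω).toReal ∂Q = (∫⁻ ω in A, X t ω ∂Q).toReal := fun t ht A =>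
    integral_toReal (hXm t ht).aemeasurable.restrict
      (ae_restrict_of_ae (ae_lt_top (hXm t ht) (hfin t ht)))
  refine ⟨fun t ht => ⟨(hX t ht).ennreal_toReal.stronglyMeasurable, hint t ht⟩,
    fun r hr t ht hrt => ?_⟩
  refine condExp_ae_le_of_forall_setIntegral_le (F.le r) (hint t ht) (hint r hr)
    (hX r hr).ennreal_toReal.stronglyMeasurable fun A hA => ?_
  rw [hsetIntegral t ht, hsetIntegral r hr]
  exact ENNReal.toReal_mono (ne_top_of_le_ne_top (hfin r hr) (setLIntegral_le_lintegral _ _))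
    (hanti r hr t ht hrt A hA)

namespace MarketModel

variable {d : ℕ} {Ω : Type*} [MeasurableSpace Ω] {T : ℝ} (M : MarketModel d Ω T)

theorem S0_lt_top (a b : Fin d) : M.S0 a b < ∞ :=
  ENNReal.sum_lt_top.1 (M.active_S0 a) b (Finset.mem_univ b)

theorem isExchangeMatrix_S0 [Nonempty Ω] : IsExchangeMatrix M.S0 := by
  obtain ⟨ω⟩ := ‹Nonempty Ω›
  simpa [M.init_S ω] using M.exchange_S 0 ⟨le_rfl, M.T_pos.le⟩ ω

theorem S0_ne_zero [Nonempty Ω] (a b : Fin d) : M.S0 a b ≠ 0 := fun h =>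
  (M.S0_lt_top b a).ne ((M.isExchangeMatrix_S0.apply_eq_top_iff b a).2 h)

theorem measurable_S {t : ℝ} (ht : t ∈ Icc 0 T) (a b : Fin d) :
    Measurable fun ω => M.S t ω a b :=
  (M.adapted_S t ht a b).mono (M.F.le t) le_rfl

end MarketModel

namespace NumeraireConsistent

variable {d : ℕ} {Ω : Type*} [MeasurableSpace Ω] {T : ℝ} {M : MarketModel d Ω T}
  {Q : Fin d → Measure Ω} {i j : Fin d} {r t : ℝ}

theorem setLIntegral_le_mul_measure (hQ : NumeraireConsistent M Q) (ht : t ∈ Icc 0 T)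
    {A : Set Ω} (hA : MeasurableSet[M.F t] A) :
    ∫⁻ ω in A, M.S t ω i j ∂Q i ≤ M.S0 i j * Q j A := by
  rw [hQ.2 i j t ht A hA]
  exact mul_le_mul_right (measure_mono inter_subset_left) _

theorem lintegral_lt_top (hQ : NumeraireConsistent M Q) (ht : t ∈ Icc 0 T) :
    ∫⁻ ω, M.S t ω i j ∂Q i < ∞ := by
  have := hQ.1 j
  calc ∫⁻ ω, M.S t ω i j ∂Q i ≤ M.S0 i j := by
        simpa using hQ.setLIntegral_le_mul_measure (i := i) (j := j) ht MeasurableSet.univ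
    _ < ∞ := M.S0_lt_top i j

theorem ae_ne_top (hQ : NumeraireConsistent M Q) (ht : t ∈ Icc 0 T) :
    ∀ᵐ ω ∂Q i, M.S t ω i j ≠ ∞ :=
  (ae_lt_top (M.measurable_S ht i j) (hQ.lintegral_lt_top ht).ne).mono fun _ h => h.ne

theorem ae_swap_ne_zero (hQ : NumeraireConsistent M Q) (ht : t ∈ Icc 0 T) :
    ∀ᵐ ω ∂Q i, M.S t ω j i ≠ 0 :=
  (hQ.ae_ne_top (j := j) ht).mono fun ω h h0 =>
    h (((M.exchange_S t ht ω).apply_eq_top_iff i j).2 h0)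

theorem measure_inter_pos_antitone (hQ : NumeraireConsistent M Q) (hr : r ∈ Icc 0 T)
    (ht : t ∈ Icc 0 T) (hrt : r ≤ t) {A : Set Ω} (hA : MeasurableSet[M.F r] A) :
    Q j (A ∩ {ω | 0 < M.S t ω j i}) ≤ Q j (A ∩ {ω | 0 < M.S r ω j i}) := by
  have := hQ.1 i
  have := nonempty_of_isProbabilityMeasure (Q i)
  set B := A ∩ {ω | M.S r ω j i = 0}
  have hB : MeasurableSet[M.F r] B :=
    hA.inter (M.adapted_S r hr j i (measurableSet_singleton 0))
  have hBi : Q i B = 0 :=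
    measure_mono_null (fun ω hω => not_not.2 hω.2) (ae_iff.1 (hQ.ae_swap_ne_zero hr))
  have hBj : Q j (B ∩ {ω | 0 < M.S t ω j i}) = 0 := by
    have h := hQ.2 i j t ht B (M.F.mono hrt _ hB)
    rw [setLIntegral_measure_zero _ _ hBi] at h
    exact (mul_eq_zero.1 h.symm).resolve_left (M.S0_ne_zero i j)
  calc Q j (A ∩ {ω | 0 < M.S t ω j i})
      ≤ Q j (A ∩ {ω | 0 < M.S r ω j i} ∪ B ∩ {ω | 0 < M.S t ω j i}) := by
        refine measure_mono fun ω ⟨hωA, hωt⟩ => ?_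
        rcases eq_zero_or_pos (M.S r ω j i) with h0 | hpos
        · exact Or.inr ⟨⟨hωA, h0⟩, hωt⟩
        · exact Or.inl ⟨hωA, hpos⟩
    _ ≤ Q j (A ∩ {ω | 0 < M.S r ω j i}) + Q j (B ∩ {ω | 0 < M.S t ω j i}) :=
        measure_union_le _ _
    _ = Q j (A ∩ {ω | 0 < M.S r ω j i}) := by rw [hBj, add_zero]

theorem setLIntegral_antitone (hQ : NumeraireConsistent M Q) (hr : r ∈ Icc 0 T)
    (ht : t ∈ Icc 0 T) (hrt : r ≤ t) {A : Set Ω} (hA : MeasurableSet[M.F r] A) :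
    ∫⁻ ω in A, M.S t ω i j ∂Q i ≤ ∫⁻ ω in A, M.S r ω i j ∂Q i := by
  rw [hQ.2 i j t ht A (M.F.mono hrt _ hA), hQ.2 i j r hr A hA]
  exact mul_le_mul_right (hQ.measure_inter_pos_antitone hr ht hrt hA) _

theorem supermartingaleOn (hQ : NumeraireConsistent M Q) :
    SupermartingaleOn M.F (Q i) (fun t ω => (M.S t ω i j).toReal) T :=
  have := hQ.1 i
  supermartingaleOn_toReal_of_setLIntegral_antitone (fun t ht => M.adapted_S t ht i j)
    (fun _ ht => (hQ.lintegral_lt_top ht).ne)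
    fun _ hr _ ht hrt _ hA => hQ.setLIntegral_antitone hr ht hrt hA

theorem ae_forall_ne_top (hQ : NumeraireConsistent M Q) :
    ∀ᵐ ω ∂Q i, ∀ t ∈ Icc 0 T, M.S t ω i j ≠ ∞ := by
  have := hQ.1 j
  set D := Icc 0 T ∩ range ((↑) : ℚ → ℝ)
  have hD : D.Countable := (countable_range _).mono inter_subset_right
  have hunbounded : Q i (⋂ n : ℕ, {ω | ∃ s ∈ D, (n : ℝ≥0∞) ≤ M.S s ω i j}) = 0 := by
    refine ENNReal.eq_zero_of_forall_natCast_mul_le (M.S0_lt_top i j).ne fun n => ?_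
    calc (n : ℝ≥0∞) * Q i (⋂ n : ℕ, {ω | ∃ s ∈ D, (n : ℝ≥0∞) ≤ M.S s ω i j})
        ≤ n * Q i {ω | ∃ s ∈ D, (n : ℝ≥0∞) ≤ M.S s ω i j} :=
          mul_le_mul_right (measure_mono (iInter_subset _ n)) _
      _ ≤ M.S0 i j * Q j univ :=
          mul_measure_exists_mem_le_le_of_setLIntegral_le (X := fun s ω => M.S s ω i j) hD
            (fun s hs => M.adapted_S s hs.1 i j)
            (fun s hs _ hA => hQ.setLIntegral_le_mul_measure hs.1 hA) _
      _ = M.S0 i j := by rw [measure_univ, mul_one]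
  filter_upwards [hQ.ae_ne_top (j := j) ⟨M.T_pos.le, le_rfl⟩,
    measure_eq_zero_iff_ae_notMem.1 hunbounded] with ω hT hω t ht htop
  rcases ht.2.eq_or_lt with rfl | htT
  · exact hT htop
  have hrc := M.rc_S ω i j t ⟨ht.1, htT⟩
  rw [htop] at hrc
  refine hω (mem_iInter.2 fun n => ?_)
  obtain ⟨q, hq, hlt⟩ :=
    exists_ratCast_mem_Ioo_lt_of_tendsto_top htT hrc (ENNReal.natCast_lt_top n)
  exact ⟨q, ⟨⟨ht.1.trans hq.1.le, hq.2.le⟩, q, rfl⟩, hlt.le⟩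

theorem ae_forall_sum_lt_top (hQ : NumeraireConsistent M Q) :
    ∀ᵐ ω ∂Q i, ∀ t ∈ Icc 0 T, ∑ j, M.S t ω i j < ∞ := by
  filter_upwards [ae_all_iff.2 fun j => hQ.ae_forall_ne_top (i := i) (j := j)] with ω hω t ht
  exact ENNReal.sum_lt_top.2 fun j _ => (hω j t ht).lt_top

end NumeraireConsistent

theorem numeraireConsistent_supermartingale_general {d : ℕ} {Ω : Type*} [MeasurableSpace Ω] {T : ℝ}
    (M : MarketModel d Ω T) (Q : Fin d → Measure Ω)
    (hQ : NumeraireConsistent M Q) (i : Fin d) :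
    (∀ j, SupermartingaleOn M.F (Q i) (fun t ω => (M.S t ω i j).toReal) T) ∧
    (∀ t ∈ Set.Icc (0 : ℝ) T, ∀ j,
      (∀ᵐ ω ∂(Q i), M.S t ω i j ≠ ∞) ∧ ∫⁻ ω, M.S t ω i j ∂(Q i) < ∞) ∧
    Q i {ω | ∀ t ∈ Set.Icc (0 : ℝ) T, ∑ j, M.S t ω i j < ∞} = 1 := by
  have := hQ.1 i
  refine ⟨fun j => hQ.supermartingaleOn, fun t ht j => ⟨hQ.ae_ne_top ht, hQ.lintegral_lt_top ht⟩,
    ?_⟩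
  exact (measure_congr (ae_eq_univ.2 hQ.ae_forall_sum_lt_top)).trans measure_univ

/-- Proposition, part (a), first half: for a numéraire-consistent family
`(Q_i)`, each row `S_i` is a `Q_i`-supermartingale (in particular real-valued and integrable
under `Q_i`), and `Q_i`-almost surely the `i`-th currency never devalues on `[0, T]`. -/
theorem numeraireConsistent_supermartingale {d : ℕ} {Ω : Type*} [MeasurableSpace Ω] {T : ℝ}
    (hd : 0 < d) (M : MarketModel d Ω T) (Q : Fin d → Measure Ω)
    (hQ : NumeraireConsistent M Q) (i : Fin d) :
    (∀ j, SupermartingaleOn M.F (Q i) (fun t ω => (M.S t ω i j).toReal) T) ∧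
    (∀ t ∈ Set.Icc (0 : ℝ) T, ∀ j,
      (∀ᵐ ω ∂(Q i), M.S t ω i j ≠ ∞) ∧ ∫⁻ ω, M.S t ω i j ∂(Q i) < ∞) ∧
    Q i {ω | ∀ t ∈ Set.Icc (0 : ℝ) T, ∑ j, M.S t ω i j < ∞} = 1 :=
  numeraireConsistent_supermartingale_general M Q hQ i
end
end
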